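/- arXiv:2103.13619 — 3 statements merged into one kernel-verified Lean document; each statement's English description precedes it below -/
import Mathlib

section
/- There exists an absolute constant C > 0 such that for all real numbers T > 0, α > 0, β > 0, |(1/π)·∫_{−T}^{T} exp(i·α·x)·(sin(β·x)/x) dx − δ(β − α)| ≤ C·min(1, 1/(T·|β − α|)), where δ(y) = 1 for y > 0, δ(0) = 1/2, and δ(y) = 0 for y < 0 (for β = α the bound is interpreted as C·min(1, ∞) = C). -/
open Real

/-- The step function `δ`: `1` on the positive reals, `1/2` at `0`, `0` on the negatives. -/
noncomputable def stepDelta (y : ℝ) : ℝ :=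
  if 0 < y then 1 else if y = 0 then 1 / 2 else 0

set_option maxHeartbeats 1000000

open MeasureTheory intervalIntegral Filter Set Topology


lemma abs_sinc_le_one (x : ℝ) : |Real.sin x / x| ≤ 1 := by
  rcases eq_or_ne x 0 with h | h
  · simp [h]
  · rw [abs_div, div_le_one (abs_pos.2 h)]
    exact Real.abs_sin_le_abs

lemma intervalIntegrable_of_bdd {f : ℝ → ℝ} {M lo hi : ℝ} (hm : Measurable f)
    (hb : ∀ x, |f x| ≤ M) : IntervalIntegrable f volume lo hi := by
  rw [intervalIntegrable_iff]
  exact Measure.integrableOn_of_bounded (by exact (measure_Ioc_lt_top).ne)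
    hm.aestronglyMeasurable (ae_of_all _ hb)

lemma intervalIntegrableC_of_bdd {f : ℝ → ℂ} {M : ℝ} {lo hi : ℝ} (hm : Measurable f)
    (hb : ∀ x, ‖f x‖ ≤ M) : IntervalIntegrable f volume lo hi := by
  rw [intervalIntegrable_iff]
  exact Measure.integrableOn_of_bounded (by exact (measure_Ioc_lt_top).ne)
    hm.aestronglyMeasurable (ae_of_all _ hb)

lemma sinc_meas (c : ℝ) : Measurable fun x : ℝ => Real.sin (c * x) / x := by
  fun_prop

lemma sinc_bdd (c x : ℝ) : |Real.sin (c * x) / x| ≤ |c| := by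
  rcases eq_or_ne x 0 with h | h
  · simp [h]
  · rw [abs_div, div_le_iff₀ (abs_pos.2 h)]
    calc |Real.sin (c * x)| ≤ |c * x| := Real.abs_sin_le_abs
    _ = |c| * |x| := abs_mul c x

lemma sinc_intInt (c lo hi : ℝ) :
    IntervalIntegrable (fun x => Real.sin (c * x) / x) volume lo hi :=
  intervalIntegrable_of_bdd (sinc_meas c) (sinc_bdd c)

lemma sinc_intInt' (lo hi : ℝ) :
    IntervalIntegrable (fun x => Real.sin x / x) volume lo hi := by
  simpa using sinc_intInt 1 lo hi

noncomputable def Si (y : ℝ) : ℝ := ∫ x in (0:ℝ)..y, Real.sin x / x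

lemma Si_zero : Si 0 = 0 := integral_same

lemma si_scale (c T : ℝ) : (∫ x in (0:ℝ)..T, Real.sin (c * x) / x) = Si (c * T) := by
  rcases eq_or_ne c 0 with hc | hc
  · simp [hc, Si]
  · have h1 : ∀ x : ℝ, Real.sin (c * x) / x = c * ((fun u => Real.sin u / u) (c * x)) := by
      intro x
      rcases eq_or_ne x 0 with hx | hx
      · simp [hx]
      · field_simp
    rw [integral_congr (fun x _ => h1 x), intervalIntegral.integral_const_mul,
      integral_comp_mul_left (fun u => Real.sin u / u) hc, mul_zero, smul_eq_mul,
      ← mul_assoc, mul_inv_cancel₀ hc, one_mul]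
    rfl

lemma Si_neg (y : ℝ) : Si (-y) = -Si y := by
  have h := integral_comp_neg (fun x => Real.sin x / x) (a := 0) (b := y)
  simp only [Real.sin_neg, neg_div_neg_eq, neg_zero] at h
  rw [Si, integral_symm, ← h]
  rfl

lemma abs_Si_le (y : ℝ) : |Si y| ≤ |y| := by
  have := intervalIntegral.norm_integral_le_of_norm_le_const
    (C := 1) (f := fun x => Real.sin x / x) (a := 0) (b := y)
    (fun x _ => by rw [Real.norm_eq_abs]; exact abs_sinc_le_one x)
  simpa [Si] using this

lemma si_diff {a b : ℝ} (ha : 0 < a) (hab : a ≤ b) : |Si b - Si a| ≤ 2 / a := by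
  have hne : ∀ x ∈ Set.uIcc a b, x ≠ 0 := by
    intro x hx
    rw [Set.uIcc_of_le hab] at hx
    exact ne_of_gt (lt_of_lt_of_le ha hx.1)
  have hdiff : Si b - Si a = ∫ x in a..b, Real.sin x / x := by
    have := integral_add_adjacent_intervals (sinc_intInt' 0 a) (sinc_intInt' a b)
    rw [Si, Si]; linarith [this]
  have hparts : (∫ x in a..b, x⁻¹ * Real.sin x)
      = b⁻¹ * (-Real.cos b) - a⁻¹ * (-Real.cos a) - ∫ x in a..b, -(x ^ 2)⁻¹ * (-Real.cos x) := by
    apply intervalIntegral.integral_mul_deriv_eq_deriv_mul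
      (u := fun y => y⁻¹) (v := fun y => -Real.cos y)
    · exact fun x hx => hasDerivAt_inv (hne x hx)
    · exact fun x hx => by have := (Real.hasDerivAt_cos x).neg; rwa [neg_neg] at this
    · apply ContinuousOn.intervalIntegrable
      exact (((continuousOn_pow 2).inv₀ (fun x hx => pow_ne_zero 2 (hne x hx))).neg)
    · exact Real.continuous_sin.intervalIntegrable a b
  have hinv2 : (∫ x in a..b, (x ^ 2)⁻¹) = a⁻¹ - b⁻¹ := by
    have : ∀ x ∈ Set.uIcc a b, HasDerivAt (fun y => -y⁻¹) ((x ^ 2)⁻¹) x := by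
      intro x hx
      have := (hasDerivAt_inv (hne x hx)).neg; rwa [neg_neg] at this
    rw [intervalIntegral.integral_eq_sub_of_hasDerivAt this
      (ContinuousOn.intervalIntegrable
        ((continuousOn_pow 2).inv₀ (fun x hx => pow_ne_zero 2 (hne x hx))))]
    ring
  have hIcos : |∫ x in a..b, -(x ^ 2)⁻¹ * (-Real.cos x)| ≤ a⁻¹ - b⁻¹ := by
    rw [← hinv2]
    calc |∫ x in a..b, -(x ^ 2)⁻¹ * (-Real.cos x)|
        ≤ ∫ x in a..b, |-(x ^ 2)⁻¹ * (-Real.cos x)| :=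
          intervalIntegral.abs_integral_le_integral_abs hab
      _ ≤ ∫ x in a..b, (x ^ 2)⁻¹ := by
          apply intervalIntegral.integral_mono_on hab
          · apply IntervalIntegrable.abs
            apply ContinuousOn.intervalIntegrable
            exact (((continuousOn_pow 2).inv₀ (fun x hx => pow_ne_zero 2 (hne x hx))).neg).mul
              (Real.continuous_cos.continuousOn.neg)
          · exact ContinuousOn.intervalIntegrable
              ((continuousOn_pow 2).inv₀ (fun x hx => pow_ne_zero 2 (hne x hx)))
          · intro x hx
            rw [abs_mul, abs_neg, abs_neg, abs_of_nonneg (by positivity : (0:ℝ) ≤ (x^2)⁻¹)]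
            nlinarith [Real.abs_cos_le_one x, abs_nonneg (Real.cos x),
              inv_nonneg.2 (sq_nonneg x)]
  have heq2 : (∫ x in a..b, Real.sin x / x) = ∫ x in a..b, x⁻¹ * Real.sin x :=
    integral_congr (fun x _ => by rw [← div_eq_inv_mul])
  rw [hdiff, heq2, hparts]
  have h1 : |b⁻¹ * (-Real.cos b)| ≤ b⁻¹ := by
    rw [abs_mul, abs_neg, abs_of_nonneg (inv_nonneg.2 (by linarith : (0:ℝ) ≤ b))]
    nlinarith [Real.abs_cos_le_one b, inv_nonneg.2 (show (0:ℝ) ≤ b by linarith)]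
  have h2 : |a⁻¹ * (-Real.cos a)| ≤ a⁻¹ := by
    rw [abs_mul, abs_neg, abs_of_nonneg (inv_nonneg.2 ha.le)]
    nlinarith [Real.abs_cos_le_one a, inv_nonneg.2 ha.le]
  have hb : 0 < b := lt_of_lt_of_le ha hab
  have : |b⁻¹ * (-Real.cos b) - a⁻¹ * (-Real.cos a) - ∫ x in a..b, -(x ^ 2)⁻¹ * (-Real.cos x)|
      ≤ b⁻¹ + a⁻¹ + (a⁻¹ - b⁻¹) := by
    calc _ ≤ |b⁻¹ * (-Real.cos b) - a⁻¹ * (-Real.cos a)|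
          + |∫ x in a..b, -(x ^ 2)⁻¹ * (-Real.cos x)| := abs_sub _ _
    _ ≤ (|b⁻¹ * (-Real.cos b)| + |a⁻¹ * (-Real.cos a)|)
          + |∫ x in a..b, -(x ^ 2)⁻¹ * (-Real.cos x)| := by
        gcongr; exact abs_sub _ _
    _ ≤ b⁻¹ + a⁻¹ + (a⁻¹ - b⁻¹) := add_le_add (add_le_add h1 h2) hIcos
  calc _ ≤ b⁻¹ + a⁻¹ + (a⁻¹ - b⁻¹) := this
  _ = 2 / a := by field_simp; ring

lemma kernel_sum (n : ℕ) {t : ℝ} (ht : Real.sin (t / 2) ≠ 0) :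
    Real.sin (((n : ℝ) + 1 / 2) * t) / (2 * Real.sin (t / 2))
      = 1 / 2 + ∑ k ∈ Finset.range n, Real.cos (((k : ℝ) + 1) * t) := by
  induction n with
  | zero =>
      have h : ((0 : ℕ) + (1:ℝ) / 2) * t = t / 2 := by push_cast; ring
      rw [h]
      field_simp
      ring
  | succ n ih =>
      have h1 : (((n + 1 : ℕ) : ℝ) + 1 / 2) * t = ((n : ℝ) + 1) * t + t / 2 := by
        push_cast; ring
      have h2 : (((n : ℕ) : ℝ) + 1 / 2) * t = ((n : ℝ) + 1) * t - t / 2 := by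
        push_cast; ring
      have hsum : ∑ k ∈ Finset.range n, Real.cos (((k : ℝ) + 1) * t)
          = Real.sin (((n : ℝ) + 1 / 2) * t) / (2 * Real.sin (t / 2)) - 1 / 2 := by
        linarith [ih]
      rw [Finset.sum_range_succ, hsum, h1, Real.sin_add, h2, Real.sin_sub]
      field_simp
      ring

lemma kernel_integral (n : ℕ) :
    (∫ t in (0:ℝ)..π, Real.sin (((n : ℝ) + 1 / 2) * t) / (2 * Real.sin (t / 2))) = π / 2 := by
  have hcongr : (∫ t in (0:ℝ)..π, Real.sin (((n : ℝ) + 1 / 2) * t) / (2 * Real.sin (t / 2)))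
      = ∫ t in (0:ℝ)..π, (1 / 2 + ∑ k ∈ Finset.range n, Real.cos (((k : ℝ) + 1) * t)) := by
    apply intervalIntegral.integral_congr_ae
    apply Filter.Eventually.of_forall
    intro t ht
    rw [Set.uIoc_of_le Real.pi_pos.le] at ht
    have hs : 0 < Real.sin (t / 2) :=
      Real.sin_pos_of_pos_of_lt_pi (by linarith [ht.1])
        (by linarith [ht.2, Real.pi_pos])
    exact kernel_sum n hs.ne'
  rw [hcongr]
  have hint : ∀ k ∈ Finset.range n,
      IntervalIntegrable (fun t => Real.cos (((k : ℝ) + 1) * t)) volume 0 π :=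
    fun k _ => (Real.continuous_cos.comp (continuous_const.mul continuous_id)).intervalIntegrable 0 π
  have hg : IntervalIntegrable
      (fun t => ∑ k ∈ Finset.range n, Real.cos (((k : ℝ) + 1) * t)) volume 0 π := by
    apply Continuous.intervalIntegrable
    exact continuous_finset_sum _ fun k _ =>
      Real.continuous_cos.comp (continuous_const.mul continuous_id)
  rw [intervalIntegral.integral_add intervalIntegrable_const hg,
    intervalIntegral.integral_finset_sum hint]
  have hcos : ∀ k : ℕ, (∫ t in (0:ℝ)..π, Real.cos (((k : ℝ) + 1) * t)) = 0 := by
    intro k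
    have hk : ((k : ℝ) + 1) ≠ 0 := by positivity
    rw [intervalIntegral.integral_comp_mul_left Real.cos hk, mul_zero, integral_cos,
      Real.sin_zero, sub_zero]
    have : ((k : ℝ) + 1) * π = ((k + 1 : ℕ) : ℝ) * π := by push_cast; ring
    rw [this, Real.sin_nat_mul_pi, smul_zero]
  simp only [hcos, Finset.sum_const_zero, add_zero]
  simp
  ring

noncomputable def gg (t : ℝ) : ℝ := 1 / t - 1 / (2 * Real.sin (t / 2))

lemma gg_meas : Measurable gg := by unfold gg; fun_prop

lemma gg_bound {t : ℝ} (ht : t ∈ Set.Ioc (0:ℝ) π) : |gg t| ≤ 2 := by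
  obtain ⟨ht0, htπ⟩ := ht
  have hs : 0 < Real.sin (t / 2) :=
    Real.sin_pos_of_pos_of_lt_pi (by linarith) (by linarith [Real.pi_pos])
  have hj : t ≤ π * Real.sin (t / 2) := by
    have h := Real.mul_le_sin (x := t / 2) (by linarith) (by linarith)
    have heq : 2 / π * (t / 2) = t / π := by ring
    rw [heq, div_le_iff₀ Real.pi_pos] at h
    linarith [h]
  have hcub : t - 2 * Real.sin (t / 2) ≤ t ^ 3 / 4 := by
    rcases le_or_gt (t / 2) 1 with h | h
    · have h2 := Real.sin_gt_sub_cube (by linarith : (0:ℝ) < t / 2)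
      nlinarith [pow_nonneg ht0.le 3]
    · have h2 : 2 ≤ t := by linarith
      nlinarith [hs.le, mul_nonneg (mul_nonneg ht0.le (sub_nonneg.2 h2))
        (by linarith : (0:ℝ) ≤ t + 2)]
  have hnum0 : 0 ≤ t - 2 * Real.sin (t / 2) := by
    nlinarith [Real.sin_le (show (0:ℝ) ≤ t / 2 by linarith)]
  have hgg : gg t = -((t - 2 * Real.sin (t / 2)) / (t * (2 * Real.sin (t / 2)))) := by
    unfold gg; field_simp; ring
  rw [hgg, abs_neg, abs_div, abs_of_nonneg hnum0, abs_of_pos (by positivity),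
    div_le_iff₀ (by positivity)]
  nlinarith [hcub, hj, hs, Real.pi_le_four, Real.pi_pos, mul_pos ht0 hs,
    mul_le_mul_of_nonneg_left hj ht0.le, sq_nonneg t]

lemma expgg_integrableOn (c : ℝ) :
    IntegrableOn (fun v : ℝ => Complex.exp ((-(c * v) : ℝ) * Complex.I) * (gg v : ℂ))
      (Set.Ioc 0 π) volume := by
  apply Measure.integrableOn_of_bounded (M := 2) measure_Ioc_lt_top.ne
  · apply Measurable.aestronglyMeasurable
    apply Measurable.mul
    · exact Complex.measurable_exp.comp
        ((Complex.measurable_ofReal.comp ((measurable_const.mul measurable_id).neg)).mul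
          measurable_const)
    · exact Complex.measurable_ofReal.comp gg_meas
  · rw [ae_restrict_iff' measurableSet_Ioc]
    apply ae_of_all
    intro t ht
    rw [norm_mul, Complex.norm_exp_ofReal_mul_I, one_mul,
      Complex.norm_real, Real.norm_eq_abs]
    exact gg_bound ht

lemma gg_rl : Tendsto (fun n : ℕ => ∫ t in (0:ℝ)..π, Real.sin (((n : ℝ) + 1 / 2) * t) * gg t)
    atTop (𝓝 0) := by
  have h0 := Real.tendsto_integral_exp_smul_cocompact
    (fun t : ℝ => (Set.Ioc (0:ℝ) π).indicator (fun s => (gg s : ℂ)) t)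
  have hcomp : Tendsto (fun n : ℕ => ((n : ℝ) + 1 / 2) / (2 * π)) atTop (Filter.cocompact ℝ) := by
    have hc2 : (atTop : Filter ℝ) ≤ Filter.cocompact ℝ := by
      rw [cocompact_eq_atBot_atTop]; exact le_sup_right
    apply Tendsto.mono_right _ hc2
    apply Filter.Tendsto.atTop_div_const (by positivity)
    exact Filter.tendsto_atTop_add_const_right atTop (1/2) tendsto_natCast_atTop_atTop
  have h1 := h0.comp hcomp
  have key : ∀ n : ℕ,
      (∫ v : ℝ, Real.fourierChar (-(v * (((n : ℝ) + 1 / 2) / (2 * π)))) •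
        (Set.Ioc (0:ℝ) π).indicator (fun s => (gg s : ℂ)) v)
      = ∫ v in Set.Ioc (0:ℝ) π,
          Complex.exp ((-((((n : ℝ) + 1 / 2)) * v) : ℝ) * Complex.I) * (gg v : ℂ) := by
    intro n
    rw [← MeasureTheory.integral_indicator measurableSet_Ioc]
    congr 1
    funext v
    by_cases hv : v ∈ Set.Ioc (0:ℝ) π
    · rw [Set.indicator_of_mem hv, Set.indicator_of_mem hv, Circle.smul_def,
        Real.fourierChar_apply]
      have harg : 2 * π * -(v * (((n : ℝ) + 1 / 2) / (2 * π))) = -(((n : ℝ) + 1 / 2) * v) := by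
        field_simp
      rw [harg, smul_eq_mul]
    · rw [Set.indicator_of_notMem hv, Set.indicator_of_notMem hv, smul_zero]
  simp only [Function.comp_def, key] at h1
  have h2 : Tendsto (fun n : ℕ =>
      (∫ v in Set.Ioc (0:ℝ) π,
        Complex.exp ((-((((n : ℝ) + 1 / 2)) * v) : ℝ) * Complex.I) * (gg v : ℂ)).im)
      atTop (𝓝 0) := by
    have := (Complex.continuous_im.tendsto 0).comp h1
    simpa [Function.comp_def] using this
  have h3 : ∀ n : ℕ,
      (∫ v in Set.Ioc (0:ℝ) π,
        Complex.exp ((-((((n : ℝ) + 1 / 2)) * v) : ℝ) * Complex.I) * (gg v : ℂ)).im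
      = -∫ t in (0:ℝ)..π, Real.sin (((n : ℝ) + 1 / 2) * t) * gg t := by
    intro n
    have him := ContinuousLinearMap.integral_comp_comm Complex.imCLM
      (expgg_integrableOn ((n : ℝ) + 1 / 2))
    simp only [Complex.imCLM_apply] at him
    rw [intervalIntegral.integral_of_le Real.pi_pos.le, ← him, ← MeasureTheory.integral_neg]
    congr 1
    funext v
    simp only [Complex.mul_im, Complex.ofReal_re, Complex.ofReal_im, mul_zero,
      Complex.exp_ofReal_mul_I_im, Real.sin_neg]
    ring
  simp only [h3] at h2
  simpa using h2.neg

lemma singg_intInt (c : ℝ) :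
    IntervalIntegrable (fun t => Real.sin (c * t) * gg t) volume 0 π := by
  rw [intervalIntegrable_iff]
  apply Measure.integrableOn_of_bounded (M := 2) (by exact measure_Ioc_lt_top.ne)
  · exact ((Real.measurable_sin.comp (measurable_const.mul measurable_id)).mul
      gg_meas).aestronglyMeasurable
  · rw [Set.uIoc_of_le Real.pi_pos.le, ae_restrict_iff' measurableSet_Ioc]
    apply ae_of_all
    intro t ht
    rw [Real.norm_eq_abs, abs_mul]
    have h1 : |Real.sin (c * t)| ≤ 1 := Real.abs_sin_le_one _
    have h2 := gg_bound ht
    nlinarith [abs_nonneg (Real.sin (c * t)), abs_nonneg (gg t)]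

lemma si_tendsto : Tendsto (fun n : ℕ => Si (((n : ℝ) + 1 / 2) * π)) atTop (𝓝 (π / 2)) := by
  have heq : ∀ n : ℕ, Si (((n : ℝ) + 1 / 2) * π)
      = (∫ t in (0:ℝ)..π, Real.sin (((n : ℝ) + 1 / 2) * t) * gg t) + π / 2 := by
    intro n
    set c : ℝ := (n : ℝ) + 1 / 2 with hc
    have h1 : Si (c * π) = ∫ t in (0:ℝ)..π, Real.sin (c * t) / t := (si_scale c π).symm
    have hker : IntervalIntegrable (fun t => Real.sin (c * t) / (2 * Real.sin (t / 2)))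
        volume 0 π := by
      have hEq : (fun t => Real.sin (c * t) / (2 * Real.sin (t / 2)))
          = fun t => Real.sin (c * t) / t - Real.sin (c * t) * gg t := by
        funext t
        simp only [gg, mul_sub, mul_one_div]
        ring
      rw [hEq]
      exact (sinc_intInt c 0 π).sub (singg_intInt c)
    have hsplit : (∫ t in (0:ℝ)..π, Real.sin (c * t) / t)
        = (∫ t in (0:ℝ)..π, Real.sin (c * t) * gg t)
          + ∫ t in (0:ℝ)..π, Real.sin (c * t) / (2 * Real.sin (t / 2)) := by
      rw [← intervalIntegral.integral_add (singg_intInt c) hker]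
      apply integral_congr
      intro t _
      simp only [gg, mul_sub, mul_one_div]
      ring
    rw [h1, hsplit, kernel_integral n]
  simp_rw [heq]
  simpa using gg_rl.add (tendsto_const_nhds : Tendsto (fun _ : ℕ => π / 2) atTop (𝓝 (π / 2)))

lemma si_close {a : ℝ} (ha : 0 < a) : |Si a - π / 2| ≤ 2 / a := by
  have hev : ∀ᶠ n : ℕ in atTop, |Si a - Si (((n : ℝ) + 1 / 2) * π)| ≤ 2 / a := by
    filter_upwards [eventually_ge_atTop ⌈a⌉₊] with n hn
    have han : a ≤ (n : ℝ) := (Nat.le_ceil a).trans (Nat.cast_le.2 hn)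
    have hle : a ≤ ((n : ℝ) + 1 / 2) * π := by
      nlinarith [Real.pi_gt_three, Nat.cast_nonneg (α := ℝ) n]
    rw [abs_sub_comm]
    exact si_diff ha hle
  exact le_of_tendsto ((tendsto_const_nhds.sub si_tendsto).abs) hev

lemma si_est {y : ℝ} (hy : 0 < y) : |Si y - π / 2| ≤ 3 * min 1 (1 / y) := by
  rcases le_or_gt 1 y with h | h
  · rw [min_eq_right (by rw [div_le_one hy]; exact h)]
    calc |Si y - π / 2| ≤ 2 / y := si_close hy
    _ ≤ 3 * (1 / y) := by rw [mul_one_div]; gcongr; norm_num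
  · rw [min_eq_left (by rw [le_div_iff₀ hy, one_mul]; exact h.le)]
    have h1 : |Si y| ≤ y := (abs_Si_le y).trans_eq (abs_of_pos hy)
    have h2 : |Si y - π / 2| ≤ |Si y| + π / 2 := by
      have h3 := abs_sub (Si y) (π / 2)
      rwa [abs_of_pos (div_pos Real.pi_pos two_pos)] at h3
    nlinarith [Real.pi_le_four]


theorem sine_integral_separation :
    ∃ C : ℝ, 0 < C ∧ ∀ T α β : ℝ, 0 < T → 0 < α → 0 < β →
      ‖(1 / (π : ℂ)) *
          (∫ x in (-T)..T,
            Complex.exp (Complex.I * (α * x)) * ((Real.sin (β * x) / x : ℝ) : ℂ))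
          - (stepDelta (β - α) : ℂ)‖ ≤
        C * (if β = α then 1 else min 1 (1 / (T * |β - α|))) := by
  refine ⟨6, by norm_num, ?_⟩
  intro T α β hT hα hβ
  set u : ℝ → ℝ := fun x => Real.cos (α * x) * (Real.sin (β * x) / x) with hu_def
  set v : ℝ → ℝ := fun x => Real.sin (α * x) * (Real.sin (β * x) / x) with hv_def
  have hu_meas : Measurable u := by unfold u; fun_prop
  have hv_meas : Measurable v := by unfold v; fun_prop
  have hu_bdd : ∀ x, |u x| ≤ |β| := by
    intro x
    rw [hu_def, abs_mul]
    nlinarith [Real.abs_cos_le_one (α * x), sinc_bdd β x, abs_nonneg (Real.sin (β * x) / x),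
      abs_nonneg (Real.cos (α * x))]
  have hv_bdd : ∀ x, |v x| ≤ |β| := by
    intro x
    rw [hv_def, abs_mul]
    nlinarith [Real.abs_sin_le_one (α * x), sinc_bdd β x, abs_nonneg (Real.sin (β * x) / x),
      abs_nonneg (Real.sin (α * x))]
  have hu_int : ∀ lo hi : ℝ, IntervalIntegrable u volume lo hi :=
    fun lo hi => intervalIntegrable_of_bdd hu_meas hu_bdd
  have hv_int : ∀ lo hi : ℝ, IntervalIntegrable v volume lo hi :=
    fun lo hi => intervalIntegrable_of_bdd hv_meas hv_bdd
  -- split complex integrand into real and imaginary parts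
  have hfe : ∀ x : ℝ, Complex.exp (Complex.I * (α * x)) * ((Real.sin (β * x) / x : ℝ) : ℂ)
      = ((u x : ℝ) : ℂ) + ((v x : ℝ) : ℂ) * Complex.I := by
    intro x
    rw [mul_comm Complex.I, Complex.exp_mul_I, hu_def, hv_def]
    push_cast
    ring
  have hC1 : IntervalIntegrable (fun x => ((u x : ℝ) : ℂ)) volume (-T) T :=
    intervalIntegrableC_of_bdd (f := fun x => ((u x : ℝ) : ℂ))
      (Complex.measurable_ofReal.comp hu_meas)
      (M := |β|) (fun x => by rw [Complex.norm_real, Real.norm_eq_abs]; exact hu_bdd x)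
  have hC2 : IntervalIntegrable (fun x => ((v x : ℝ) : ℂ) * Complex.I) volume (-T) T :=
    (intervalIntegrableC_of_bdd (f := fun x => ((v x : ℝ) : ℂ))
      (Complex.measurable_ofReal.comp hv_meas)
      (M := |β|) (fun x => by rw [Complex.norm_real, Real.norm_eq_abs]; exact hv_bdd x)).mul_const _
  have hsplit : (∫ x in (-T)..T,
        Complex.exp (Complex.I * (α * x)) * ((Real.sin (β * x) / x : ℝ) : ℂ))
      = ((∫ x in (-T)..T, u x : ℝ) : ℂ) + ((∫ x in (-T)..T, v x : ℝ) : ℂ) * Complex.I := by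
    rw [integral_congr (fun x _ => hfe x), intervalIntegral.integral_add hC1 hC2,
      intervalIntegral.integral_mul_const, intervalIntegral.integral_ofReal,
      intervalIntegral.integral_ofReal]
  -- the imaginary (odd) part vanishes
  have hodd : (∫ x in (-T)..T, v x) = 0 := by
    have hneg : ∀ x, v (-x) = -v x := by
      intro x
      rw [hv_def]
      simp only [mul_neg, Real.sin_neg, neg_div_neg_eq, neg_div, neg_neg]
      ring
    have h := integral_comp_neg v (a := 0) (b := T)
    simp_rw [hneg, intervalIntegral.integral_neg, neg_zero] at h
    rw [← integral_add_adjacent_intervals (hv_int (-T) 0) (hv_int 0 T), ← h]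
    ring
  -- the real (even) part gives the sine integrals
  have heven : (∫ x in (-T)..T, u x) = Si ((β + α) * T) + Si ((β - α) * T) := by
    have hu2 : ∀ x : ℝ, u x
        = 1 / 2 * (Real.sin ((β + α) * x) / x) + 1 / 2 * (Real.sin ((β - α) * x) / x) := by
      intro x
      have hnum : Real.sin ((β + α) * x) + Real.sin ((β - α) * x)
          = 2 * Real.sin (β * x) * Real.cos (α * x) := by
        rw [show (β + α) * x = β * x + α * x by ring, show (β - α) * x = β * x - α * x by ring,
          Real.sin_add, Real.sin_sub]
        ring
      have h2 : 1 / 2 * (Real.sin ((β + α) * x) / x) + 1 / 2 * (Real.sin ((β - α) * x) / x)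
          = (Real.sin ((β + α) * x) + Real.sin ((β - α) * x)) / (2 * x) := by ring
      rw [h2, hnum, hu_def]
      ring
    have hA0 : (∫ x in (0:ℝ)..T, u x)
        = 1 / 2 * Si ((β + α) * T) + 1 / 2 * Si ((β - α) * T) := by
      rw [integral_congr (fun x _ => hu2 x),
        intervalIntegral.integral_add ((sinc_intInt (β + α) 0 T).const_mul _)
          ((sinc_intInt (β - α) 0 T).const_mul _),
        intervalIntegral.integral_const_mul, intervalIntegral.integral_const_mul,
        si_scale, si_scale]
    have hneg : ∀ x, u (-x) = u x := by
      intro x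
      rw [hu_def]
      simp only [mul_neg, Real.sin_neg, Real.cos_neg, neg_div_neg_eq]
    have h := integral_comp_neg u (a := 0) (b := T)
    simp_rw [hneg, neg_zero] at h
    rw [← integral_add_adjacent_intervals (hu_int (-T) 0) (hu_int 0 T), ← h, hA0]
    ring
  have hkey : (1 / (π : ℂ)) *
        (∫ x in (-T)..T, Complex.exp (Complex.I * (α * x)) * ((Real.sin (β * x) / x : ℝ) : ℂ))
        - (stepDelta (β - α) : ℂ)
      = (((1 / π) * (Si ((β + α) * T) + Si ((β - α) * T)) - stepDelta (β - α) : ℝ) : ℂ) := by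
    rw [hsplit, hodd, heven]
    push_cast
    ring
  rw [hkey, Complex.norm_real, Real.norm_eq_abs]
  have hπ : (0:ℝ) < π := Real.pi_pos
  by_cases hβα : β = α
  · subst hβα
    rw [if_pos rfl, show (β - β) * T = 0 by ring, Si_zero, show β - β = 0 by ring]
    have hδ : stepDelta 0 = 1 / 2 := by simp [stepDelta]
    rw [hδ]
    have hy : 0 < (β + β) * T := by positivity
    have h1 := si_est hy
    have hid : 1 / π * (Si ((β + β) * T) + 0) - 1 / 2
        = 1 / π * (Si ((β + β) * T) - π / 2) := by
      field_simp
      ring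
    rw [hid, abs_mul, abs_of_pos (by positivity : (0:ℝ) < 1 / π)]
    have hm : min 1 (1 / ((β + β) * T)) ≤ 1 := min_le_left _ _
    have habs : |Si ((β + β) * T) - π / 2| ≤ 3 := by nlinarith
    rw [mul_one]
    nlinarith [abs_nonneg (Si ((β + β) * T) - π / 2), Real.pi_gt_three]
  · rw [if_neg hβα]
    have hy1 : 0 < (β + α) * T := by positivity
    have h1 := si_est hy1
    rcases lt_or_gt_of_ne (sub_ne_zero.2 hβα) with hb | hb
    · -- β < α : stepDelta = 0
      have hδ : stepDelta (β - α) = 0 := by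
        simp only [stepDelta, if_neg (asymm hb), if_neg (ne_of_lt hb)]
      have hy2 : 0 < (α - β) * T := by nlinarith
      have h2 := si_est hy2
      have hSneg : Si ((β - α) * T) = -Si ((α - β) * T) := by
        rw [show (β - α) * T = -((α - β) * T) by ring, Si_neg]
      have habsb : T * |β - α| = (α - β) * T := by
        rw [abs_of_neg hb]; ring
      rw [hδ, hSneg, habsb]
      have hid : 1 / π * (Si ((β + α) * T) + -Si ((α - β) * T)) - 0
          = 1 / π * ((Si ((β + α) * T) - π / 2) - (Si ((α - β) * T) - π / 2)) := by ring
      rw [hid, abs_mul, abs_of_pos (by positivity : (0:ℝ) < 1 / π)]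
      have hmle : min 1 (1 / ((β + α) * T)) ≤ min 1 (1 / ((α - β) * T)) := by
        apply min_le_min le_rfl
        apply one_div_le_one_div_of_le hy2
        nlinarith
      have htri : |(Si ((β + α) * T) - π / 2) - (Si ((α - β) * T) - π / 2)|
          ≤ 3 * min 1 (1 / ((β + α) * T)) + 3 * min 1 (1 / ((α - β) * T)) :=
        (abs_sub _ _).trans (add_le_add h1 h2)
      have hmn : (0:ℝ) ≤ min 1 (1 / ((α - β) * T)) :=
        le_min zero_le_one (by positivity)
      have hX : |(Si ((β + α) * T) - π / 2) - (Si ((α - β) * T) - π / 2)|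
          ≤ 6 * min 1 (1 / ((α - β) * T)) := by linarith
      have h1π : 1 / π ≤ 1 := by
        rw [div_le_one hπ]; linarith [Real.pi_gt_three]
      calc 1 / π * |(Si ((β + α) * T) - π / 2) - (Si ((α - β) * T) - π / 2)|
          ≤ 1 / π * (6 * min 1 (1 / ((α - β) * T))) :=
            mul_le_mul_of_nonneg_left hX (by positivity)
        _ ≤ 1 * (6 * min 1 (1 / ((α - β) * T))) :=
            mul_le_mul_of_nonneg_right h1π (by positivity)
        _ = 6 * min 1 (1 / ((α - β) * T)) := one_mul _
    · -- β > α : stepDelta = 1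
      have hδ : stepDelta (β - α) = 1 := by simp only [stepDelta, if_pos hb]
      have hy2 : 0 < (β - α) * T := by nlinarith
      have h2 := si_est hy2
      have habsb : T * |β - α| = (β - α) * T := by
        rw [abs_of_pos hb]; ring
      rw [hδ, habsb]
      have hid : 1 / π * (Si ((β + α) * T) + Si ((β - α) * T)) - 1
          = 1 / π * ((Si ((β + α) * T) - π / 2) + (Si ((β - α) * T) - π / 2)) := by
        field_simp
        ring
      rw [hid, abs_mul, abs_of_pos (by positivity : (0:ℝ) < 1 / π)]
      have hmle : min 1 (1 / ((β + α) * T)) ≤ min 1 (1 / ((β - α) * T)) := by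
        apply min_le_min le_rfl
        apply one_div_le_one_div_of_le hy2
        nlinarith
      have htri : |(Si ((β + α) * T) - π / 2) + (Si ((β - α) * T) - π / 2)|
          ≤ 3 * min 1 (1 / ((β + α) * T)) + 3 * min 1 (1 / ((β - α) * T)) :=
        (abs_add_le _ _).trans (add_le_add h1 h2)
      have hmn : (0:ℝ) ≤ min 1 (1 / ((β - α) * T)) :=
        le_min zero_le_one (by positivity)
      have hX : |(Si ((β + α) * T) - π / 2) + (Si ((β - α) * T) - π / 2)|
          ≤ 6 * min 1 (1 / ((β - α) * T)) := by linarith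
      have h1π : 1 / π ≤ 1 := by
        rw [div_le_one hπ]; linarith [Real.pi_gt_three]
      calc 1 / π * |(Si ((β + α) * T) - π / 2) + (Si ((β - α) * T) - π / 2)|
          ≤ 1 / π * (6 * min 1 (1 / ((β - α) * T))) :=
            mul_le_mul_of_nonneg_left hX (by positivity)
        _ ≤ 1 * (6 * min 1 (1 / ((β - α) * T))) :=
            mul_le_mul_of_nonneg_right h1π (by positivity)
        _ = 6 * min 1 (1 / ((β - α) * T)) := one_mul _
end

section
/- There exists an absolute constant C > 0 such that for all positive integers H and M, |Σ_{H < h ≤ 2H} Σ_{M < a ≤ 2M} gcd(h,a) − (6·H·M/π²)·log(2·min(H,M))| ≤ C·H·M. -/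
open Real

namespace GcdSum
open Finset


lemma card_multiples' (a b d : ℕ) (hab : a ≤ b) :
    ((Ioc a b).filter (d ∣ ·)).card = b / d - a / d := by
  have hu : Ioc 0 a ∪ Ioc a b = Ioc 0 b := Finset.Ioc_union_Ioc_eq_Ioc (Nat.zero_le a) hab
  have hdisj0 : Disjoint (Ioc 0 a) (Ioc a b) := by
    simp only [Finset.disjoint_left, mem_Ioc]; omega
  have hdisj : Disjoint ((Ioc 0 a).filter (d ∣ ·)) ((Ioc a b).filter (d ∣ ·)) :=
    hdisj0.mono (filter_subset _ _) (filter_subset _ _)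
  have := Finset.card_union_of_disjoint hdisj
  rw [← filter_union, hu, Nat.Ioc_filter_dvd_card_eq_div, Nat.Ioc_filter_dvd_card_eq_div] at this
  omega

lemma gcd_eq_sum_totient (n h a : ℕ) (hh : 0 < h)
    (hhn : Nat.gcd h a ≤ n) :
    Nat.gcd h a = ∑ d ∈ Ioc 0 n, if d ∣ h ∧ d ∣ a then d.totient else 0 := by
  rw [← Finset.sum_filter]
  have hg : 0 < Nat.gcd h a := Nat.gcd_pos_of_pos_left a hh
  have : (Ioc 0 n).filter (fun d => d ∣ h ∧ d ∣ a) = (Nat.gcd h a).divisors := by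
    ext d
    simp only [mem_filter, mem_Ioc, Nat.mem_divisors, ← Nat.dvd_gcd_iff]
    constructor
    · rintro ⟨_, hd⟩; exact ⟨hd, hg.ne'⟩
    · rintro ⟨hd, -⟩
      exact ⟨⟨Nat.pos_of_dvd_of_pos hd hg, (Nat.le_of_dvd hg hd).trans hhn⟩, hd⟩
  rw [this, Nat.sum_totient]

lemma sum_ite_dvd (s : Finset ℕ) (d c : ℕ) :
    ∑ a ∈ s, (if d ∣ a then c else 0) = (s.filter (d ∣ ·)).card * c := by
  rw [← Finset.sum_filter, Finset.sum_const, smul_eq_mul]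

lemma sum_gcd_eq (H M : ℕ) (hH : 0 < H) (hM : 0 < M) :
    (∑ h ∈ Ioc H (2*H), ∑ a ∈ Ioc M (2*M), Nat.gcd h a)
    = ∑ d ∈ Ioc 0 (2 * min H M),
        d.totient * (((Ioc H (2*H)).filter (d ∣ ·)).card * ((Ioc M (2*M)).filter (d ∣ ·)).card) := by
  set n := 2 * min H M with hn
  calc (∑ h ∈ Ioc H (2*H), ∑ a ∈ Ioc M (2*M), Nat.gcd h a)
      = ∑ h ∈ Ioc H (2*H), ∑ a ∈ Ioc M (2*M), ∑ d ∈ Ioc 0 n,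
          (if d ∣ h ∧ d ∣ a then d.totient else 0) := by
        refine Finset.sum_congr rfl fun h hh => Finset.sum_congr rfl fun a ha => ?_
        simp only [mem_Ioc] at hh ha
        refine gcd_eq_sum_totient n h a (by omega) ?_
        have h1 : Nat.gcd h a ≤ h := Nat.le_of_dvd (by omega) (Nat.gcd_dvd_left h a)
        have h2 : Nat.gcd h a ≤ a := Nat.le_of_dvd (by omega) (Nat.gcd_dvd_right h a)
        omega
    _ = ∑ h ∈ Ioc H (2*H), ∑ d ∈ Ioc 0 n, ∑ a ∈ Ioc M (2*M),
          (if d ∣ h ∧ d ∣ a then d.totient else 0) :=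
        Finset.sum_congr rfl fun h _ => Finset.sum_comm
    _ = ∑ d ∈ Ioc 0 n, ∑ h ∈ Ioc H (2*H), ∑ a ∈ Ioc M (2*M),
          (if d ∣ h ∧ d ∣ a then d.totient else 0) := Finset.sum_comm
    _ = _ := by
        refine Finset.sum_congr rfl fun d _ => ?_
        have h1 : ∀ h, (∑ a ∈ Ioc M (2*M), if d ∣ h ∧ d ∣ a then d.totient else 0)
            = if d ∣ h then ((Ioc M (2*M)).filter (d ∣ ·)).card * d.totient else 0 := by
          intro h
          by_cases hd : d ∣ h
          · simp only [hd, true_and, if_true]; exact sum_ite_dvd _ _ _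
          · simp [hd]
        simp only [h1]
        rw [sum_ite_dvd]
        ring

lemma sum_multiples_eq (n d : ℕ) (hd : 0 < d) (f : ℕ → ℝ) :
    ∑ k ∈ (Ioc 0 n).filter (d ∣ ·), f k = ∑ j ∈ Ioc 0 (n/d), f (d*j) := by
  refine Finset.sum_nbij' (fun k => k / d) (fun j => d * j) ?_ ?_ ?_ ?_ ?_
  · intro k hk
    simp only [mem_filter, mem_Ioc] at hk ⊢
    obtain ⟨⟨hk0, hkn⟩, hdk⟩ := hk
    exact ⟨Nat.div_pos (Nat.le_of_dvd hk0 hdk) hd, Nat.div_le_div_right hkn⟩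
  · intro j hj
    simp only [mem_Ioc, mem_filter] at hj ⊢
    refine ⟨⟨Nat.mul_pos hd hj.1, ?_⟩, Dvd.intro j rfl⟩
    rw [mul_comm]
    exact (Nat.le_div_iff_mul_le hd).mp hj.2
  · intro k hk
    simp only [mem_filter] at hk
    exact Nat.mul_div_cancel' hk.2
  · intro j _
    exact Nat.mul_div_cancel_left j hd
  · intro k hk
    simp only [mem_filter] at hk
    rw [Nat.mul_div_cancel' hk.2]

lemma harm_identity (n : ℕ) :
    ∑ k ∈ Ioc 0 n, (1/(k:ℝ)) =
      ∑ d ∈ Ioc 0 n, ((d.totient : ℝ)/(d:ℝ)^2 * ∑ j ∈ Ioc 0 (n/d), 1/(j:ℝ)^2) := by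
  have step1 : ∀ k ∈ Ioc 0 n, (1/(k:ℝ))
      = ∑ d ∈ Ioc 0 n, (if d ∣ k then (d.totient : ℝ)/(k:ℝ)^2 else 0) := by
    intro k hk
    simp only [mem_Ioc] at hk
    rw [← Finset.sum_filter]
    have hset : (Ioc 0 n).filter (· ∣ k) = k.divisors := by
      ext d
      simp only [mem_filter, mem_Ioc, Nat.mem_divisors]
      constructor
      · rintro ⟨_, hd⟩; exact ⟨hd, by omega⟩
      · rintro ⟨hd, -⟩
        exact ⟨⟨Nat.pos_of_dvd_of_pos hd (by omega), (Nat.le_of_dvd (by omega) hd).trans hk.2⟩, hd⟩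
    rw [hset, ← Finset.sum_div]
    have : ∑ d ∈ k.divisors, (d.totient : ℝ) = (k : ℝ) := by
      rw [← Nat.cast_sum]
      exact congrArg _ (Nat.sum_totient k)
    rw [this]
    have hk0 : (k:ℝ) ≠ 0 := Nat.cast_ne_zero.mpr (by omega)
    field_simp
  rw [Finset.sum_congr rfl step1, Finset.sum_comm]
  refine Finset.sum_congr rfl fun d hd => ?_
  simp only [mem_Ioc] at hd
  rw [← Finset.sum_filter, sum_multiples_eq n d hd.1, Finset.mul_sum]
  refine Finset.sum_congr rfl fun j hj => ?_
  simp only [mem_Ioc] at hj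
  have hd0 : (d:ℝ) ≠ 0 := Nat.cast_ne_zero.mpr hd.1.ne'
  have hj0 : (j:ℝ) ≠ 0 := Nat.cast_ne_zero.mpr hj.1.ne'
  push_cast
  rw [mul_pow]
  field_simp


lemma Ioc_sum_sq_eq (k : ℕ) :
    ∑ j ∈ Finset.range (k+1), (1:ℝ)/(j:ℝ)^2 = ∑ j ∈ Ioc 0 k, (1:ℝ)/(j:ℝ)^2 := by
  rw [Finset.range_eq_Ico, Finset.Ico_add_one_right_eq_Icc, ← Finset.Ioc_insert_left (Nat.zero_le k),
    Finset.sum_insert (by simp)]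
  simp

lemma T_le_zeta2 (k : ℕ) : ∑ j ∈ Ioc 0 k, (1:ℝ)/(j:ℝ)^2 ≤ π^2/6 := by
  rw [← Ioc_sum_sq_eq]
  exact _root_.sum_le_hasSum _ (fun i _ => by positivity) hasSum_zeta_two

lemma tail_sum_le (k N : ℕ) (hk : 0 < k) (hkN : k ≤ N) :
    ∑ j ∈ Ioc k N, (1:ℝ)/(j:ℝ)^2 ≤ 1/(k:ℝ) - 1/(N:ℝ) := by
  induction N with
  | zero => omega
  | succ N ih =>
    rcases Nat.lt_or_ge k (N+1) with h | h
    · have hkN' : k ≤ N := by omega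
      rw [Finset.sum_Ioc_succ_top hkN']
      have h1 : (1:ℝ)/((N:ℝ)+1)^2 ≤ 1/(N:ℝ) - 1/((N:ℝ)+1) := by
        have hN0 : 0 < (N:ℝ) := by exact_mod_cast (by omega : 0 < N)
        rw [div_sub_div _ _ hN0.ne' (by positivity), div_le_div_iff₀ (by positivity) (by positivity)]
        ring_nf
        nlinarith
      have := ih hkN'
      push_cast
      push_cast at this h1
      linarith
    · have : k = N + 1 := by omega
      subst this
      simp

lemma zeta2_sub_T_le (k : ℕ) (hk : 0 < k) :
    π^2/6 - ∑ j ∈ Ioc 0 k, (1:ℝ)/(j:ℝ)^2 ≤ 1/(k:ℝ) := by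
  have htend : Filter.Tendsto (fun N => ∑ j ∈ Finset.range (N + (k+1)), (1:ℝ)/(j:ℝ)^2)
      Filter.atTop (nhds (π^2/6)) :=
    (hasSum_zeta_two.tendsto_sum_nat).comp (Filter.tendsto_add_atTop_nat (k+1))
  have hle : ∀ N : ℕ, ∑ j ∈ Finset.range (N + (k+1)), (1:ℝ)/(j:ℝ)^2
      ≤ ∑ j ∈ Ioc 0 k, (1:ℝ)/(j:ℝ)^2 + 1/(k:ℝ) := by
    intro N
    rw [Finset.range_eq_Ico,
      ← Finset.sum_Ico_consecutive _ (Nat.zero_le (k+1)) (by omega : k+1 ≤ N + (k+1)),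
      ← Finset.range_eq_Ico]
    have h1 : ∑ j ∈ Ico (k+1) (N+(k+1)), (1:ℝ)/(j:ℝ)^2 ≤ 1/(k:ℝ) := by
      have : Ico (k+1) (N+(k+1)) = Ioc k (N+k) := by
        ext x
        simp only [mem_Ico, mem_Ioc]
        omega
      rw [this]
      calc ∑ j ∈ Ioc k (N+k), (1:ℝ)/(j:ℝ)^2 ≤ 1/(k:ℝ) - 1/((N+k:ℕ):ℝ) :=
            tail_sum_le k (N+k) hk (by omega)
        _ ≤ 1/(k:ℝ) := by
            have : (0:ℝ) ≤ 1/((N+k:ℕ):ℝ) := by positivity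
            linarith
    have h2 := Ioc_sum_sq_eq k
    linarith
  have := le_of_tendsto' htend hle
  linarith

lemma phi_sum_bound (n : ℕ) (hn : 1 ≤ n) :
    |(∑ d ∈ Ioc 0 n, (d.totient:ℝ)/(d:ℝ)^2) - 6/π^2 * Real.log n| ≤ 3 := by
  set z : ℝ := π^2/6 with hz
  have hzpos : 0 < z := by positivity
  have hz1 : 1 ≤ z := by
    have := Real.pi_gt_three
    rw [hz]
    nlinarith
  set Φ : ℝ := ∑ d ∈ Ioc 0 n, (d.totient:ℝ)/(d:ℝ)^2 with hΦ
  set Hs : ℝ := ∑ k ∈ Ioc 0 n, (1/(k:ℝ)) with hHs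
  -- error term
  have hE : z*Φ - Hs = ∑ d ∈ Ioc 0 n,
      ((d.totient:ℝ)/(d:ℝ)^2 * (z - ∑ j ∈ Ioc 0 (n/d), (1:ℝ)/(j:ℝ)^2)) := by
    rw [hHs, harm_identity n, hΦ, Finset.mul_sum, ← Finset.sum_sub_distrib]
    refine Finset.sum_congr rfl fun d _ => ?_
    ring
  have hEbound : 0 ≤ z*Φ - Hs ∧ z*Φ - Hs ≤ 2 := by
    constructor
    · rw [hE]
      refine Finset.sum_nonneg fun d hd => ?_
      have h1 : (0:ℝ) ≤ (d.totient:ℝ)/(d:ℝ)^2 := by positivity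
      have h2 := T_le_zeta2 (n/d)
      exact mul_nonneg h1 (by linarith)
    · rw [hE]
      calc ∑ d ∈ Ioc 0 n, ((d.totient:ℝ)/(d:ℝ)^2 * (z - ∑ j ∈ Ioc 0 (n/d), (1:ℝ)/(j:ℝ)^2))
          ≤ ∑ d ∈ Ioc 0 n, (2/(n:ℝ)) := by
            refine Finset.sum_le_sum fun d hd => ?_
            simp only [mem_Ioc] at hd
            have hd0 : 0 < d := hd.1
            have hq : 0 < n / d := Nat.div_pos hd.2 hd0
            have h1 : (d.totient:ℝ)/(d:ℝ)^2 ≤ 1/(d:ℝ) := by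
              have := Nat.totient_le d
              have hdr : (0:ℝ) < (d:ℝ) := by exact_mod_cast hd0
              rw [div_le_div_iff₀ (by positivity) hdr]
              have : (d.totient:ℝ) ≤ (d:ℝ) := by exact_mod_cast this
              nlinarith
            have h2 : z - ∑ j ∈ Ioc 0 (n/d), (1:ℝ)/(j:ℝ)^2 ≤ 1/((n/d:ℕ):ℝ) :=
              zeta2_sub_T_le (n/d) hq
            have h3 : (1:ℝ)/((n/d:ℕ):ℝ) ≤ 2*(d:ℝ)/(n:ℝ) := by
              have hnat : n ≤ 2*(d*(n/d)) := by
                have hmod := Nat.div_add_mod n d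
                have hlt : n % d < d := Nat.mod_lt n hd0
                have hd1 : d ≤ d*(n/d) := Nat.le_mul_of_pos_right d hq
                omega
              have hqr : (0:ℝ) < ((n/d:ℕ):ℝ) := by exact_mod_cast hq
              have hnr : (0:ℝ) < (n:ℝ) := by exact_mod_cast (by omega : 0 < n)
              rw [div_le_div_iff₀ hqr hnr]
              have hc : (n:ℝ) ≤ 2*((d:ℝ)*((n/d:ℕ):ℝ)) := by exact_mod_cast hnat
              linarith
            have h4 : 0 ≤ z - ∑ j ∈ Ioc 0 (n/d), (1:ℝ)/(j:ℝ)^2 := by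
              have := T_le_zeta2 (n/d); linarith
            calc (d.totient:ℝ)/(d:ℝ)^2 * (z - ∑ j ∈ Ioc 0 (n/d), (1:ℝ)/(j:ℝ)^2)
                ≤ (1/(d:ℝ)) * (2*(d:ℝ)/(n:ℝ)) := by
                  apply mul_le_mul h1 (h2.trans h3) h4 (by positivity)
              _ = 2/(n:ℝ) := by
                  have hdr : (d:ℝ) ≠ 0 := by exact_mod_cast hd0.ne'
                  field_simp
        _ = 2 := by
            rw [Finset.sum_const, Nat.card_Ioc, Nat.sub_zero, nsmul_eq_mul]
            have hnr : (n:ℝ) ≠ 0 := by exact_mod_cast (by omega : n ≠ 0)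
            field_simp
  -- harmonic bounds
  have hHsharm : Hs = ((harmonic n : ℚ) : ℝ) := by
    rw [hHs, harmonic_eq_sum_Icc]
    push_cast
    rw [← Finset.Icc_add_one_left_eq_Ioc]
    refine Finset.sum_congr rfl fun k _ => ?_
    rw [one_div]
  have hHub : Hs ≤ 1 + Real.log n := by rw [hHsharm]; exact harmonic_le_one_add_log n
  have hHlb : Real.log n ≤ Hs := by
    rw [hHsharm]
    refine le_trans ?_ (log_add_one_le_harmonic n)
    apply Real.log_le_log (by exact_mod_cast hn)
    push_cast; linarith
  -- combine
  have hπ : (6:ℝ)/π^2 = 1/z := by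
    rw [hz]; field_simp
  have key : Φ - 6/π^2 * Real.log n = ((Hs - Real.log n) + (z*Φ - Hs))/z := by
    rw [hπ]
    field_simp
    ring
  rw [key, abs_div, abs_of_pos hzpos, div_le_iff₀ hzpos]
  obtain ⟨h1, h2⟩ := hEbound
  have habs : |(Hs - Real.log n) + (z*Φ - Hs)| ≤ 3 := by
    rw [abs_le]; constructor <;> linarith
  have : (3:ℝ) ≤ 3*z := by linarith
  linarith

lemma nat_div_cast_bounds (m d : ℕ) (hd : 0 < d) :
    (m:ℝ)/(d:ℝ) - 1 < ((m/d : ℕ):ℝ) ∧ ((m/d : ℕ):ℝ) ≤ (m:ℝ)/(d:ℝ) := by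
  have hdr : (0:ℝ) < (d:ℝ) := by exact_mod_cast hd
  constructor
  · have h : m < d*(m/d) + d := by
      have := Nat.div_add_mod m d
      have := Nat.mod_lt m hd
      omega
    have hr : (m:ℝ) < (d:ℝ)*((m/d:ℕ):ℝ) + (d:ℝ) := by exact_mod_cast h
    rw [div_sub_one hdr.ne', div_lt_iff₀ hdr]
    nlinarith
  · exact Nat.cast_div_le

lemma card_approx (N d : ℕ) (hd : 0 < d) :
    |((((Ioc N (2*N)).filter (d ∣ ·)).card : ℕ):ℝ) - (N:ℝ)/(d:ℝ)| ≤ 1 ∧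
    ((((Ioc N (2*N)).filter (d ∣ ·)).card : ℕ):ℝ) ≤ 2*(N:ℝ)/(d:ℝ) := by
  have hdr : (0:ℝ) < (d:ℝ) := by exact_mod_cast hd
  rw [card_multiples' N (2*N) d (by omega)]
  have hle : N/d ≤ (2*N)/d := Nat.div_le_div_right (by omega)
  have hcast : (((2*N)/d - N/d : ℕ):ℝ) = (((2*N)/d : ℕ):ℝ) - ((N/d : ℕ):ℝ) := by
    push_cast [Nat.cast_sub hle]; ring
  obtain ⟨h1l, h1u⟩ := nat_div_cast_bounds (2*N) d hd
  obtain ⟨h2l, h2u⟩ := nat_div_cast_bounds N d hd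
  have h2N : ((2*N : ℕ):ℝ) = 2*(N:ℝ) := by push_cast; ring
  rw [hcast]
  constructor
  · rw [abs_le]
    constructor
    · rw [h2N] at h1l
      have : 2*(N:ℝ)/(d:ℝ) - (N:ℝ)/(d:ℝ) = (N:ℝ)/(d:ℝ) := by ring
      nlinarith
    · rw [h2N] at h1u
      have : 2*(N:ℝ)/(d:ℝ) - (N:ℝ)/(d:ℝ) = (N:ℝ)/(d:ℝ) := by ring
      nlinarith
  · rw [h2N] at h1u
    have h2pos : (0:ℝ) ≤ ((N/d : ℕ):ℝ) := by positivity
    linarith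
end GcdSum

theorem gcd_double_sum_asymptotic :
    ∃ C : ℝ, 0 < C ∧ ∀ H M : ℕ, 0 < H → 0 < M →
      |(∑ h ∈ Finset.Ioc H (2 * H), ∑ a ∈ Finset.Ioc M (2 * M), (Nat.gcd h a : ℝ))
          - 6 * (H : ℝ) * (M : ℝ) / π ^ 2 * Real.log (2 * min (H : ℝ) (M : ℝ))| ≤
        C * (H : ℝ) * (M : ℝ) := by
  classical
  refine ⟨9, by norm_num, fun H M hH hM => ?_⟩
  open Finset GcdSum in
  set n := 2 * min H M with hn
  have hn1 : 1 ≤ n := by omega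
  set S : ℝ := ∑ h ∈ Finset.Ioc H (2 * H), ∑ a ∈ Finset.Ioc M (2 * M), (Nat.gcd h a : ℝ)
    with hSdef
  have hS : S = ∑ d ∈ Finset.Ioc 0 n, (d.totient:ℝ) *
      ((((Finset.Ioc H (2*H)).filter (d ∣ ·)).card:ℝ) *
       (((Finset.Ioc M (2*M)).filter (d ∣ ·)).card:ℝ)) := by
    have h0 : S = ((∑ h ∈ Finset.Ioc H (2*H), ∑ a ∈ Finset.Ioc M (2*M), Nat.gcd h a : ℕ) : ℝ) := by
      rw [hSdef]; push_cast; rfl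
    rw [h0, GcdSum.sum_gcd_eq H M hH hM]
    push_cast
    rfl
  set Φ : ℝ := ∑ d ∈ Finset.Ioc 0 n, (d.totient:ℝ)/(d:ℝ)^2 with hΦdef
  have hHr : (0:ℝ) < (H:ℝ) := by exact_mod_cast hH
  have hMr : (0:ℝ) < (M:ℝ) := by exact_mod_cast hM
  have hstep : |S - (H:ℝ)*(M:ℝ)*Φ| ≤ 6*(H:ℝ)*(M:ℝ) := by
    rw [hS, hΦdef, Finset.mul_sum, ← Finset.sum_sub_distrib]
    refine (Finset.abs_sum_le_sum_abs _ _).trans ?_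
    have hbound : ∀ d ∈ Finset.Ioc 0 n,
        |(d.totient:ℝ) * ((((Finset.Ioc H (2*H)).filter (d ∣ ·)).card:ℝ) *
          (((Finset.Ioc M (2*M)).filter (d ∣ ·)).card:ℝ))
          - (H:ℝ)*(M:ℝ)*((d.totient:ℝ)/(d:ℝ)^2)| ≤ 2*(H:ℝ) + (M:ℝ) := by
      intro d hd
      simp only [Finset.mem_Ioc] at hd
      have hd0 : 0 < d := hd.1
      have hdr : (0:ℝ) < (d:ℝ) := by exact_mod_cast hd0
      set cH : ℝ := (((Finset.Ioc H (2*H)).filter (d ∣ ·)).card:ℝ)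
      set cM : ℝ := (((Finset.Ioc M (2*M)).filter (d ∣ ·)).card:ℝ)
      obtain ⟨hH1, hH2⟩ := GcdSum.card_approx H d hd0
      obtain ⟨hM1, hM2⟩ := GcdSum.card_approx M d hd0
      have hφ : (d.totient:ℝ) ≤ (d:ℝ) := by exact_mod_cast Nat.totient_le d
      have hφ0 : (0:ℝ) ≤ (d.totient:ℝ) := by positivity
      have hfact : (d.totient:ℝ) * (cH * cM) - (H:ℝ)*(M:ℝ)*((d.totient:ℝ)/(d:ℝ)^2)
          = (d.totient:ℝ) * (cH * cM - ((H:ℝ)/(d:ℝ)) * ((M:ℝ)/(d:ℝ))) := by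
        field_simp
      rw [hfact, abs_mul, abs_of_nonneg hφ0]
      have hprod : |cH * cM - ((H:ℝ)/(d:ℝ)) * ((M:ℝ)/(d:ℝ))|
          ≤ cH * |cM - (M:ℝ)/(d:ℝ)| + ((M:ℝ)/(d:ℝ)) * |cH - (H:ℝ)/(d:ℝ)| := by
        have : cH * cM - ((H:ℝ)/(d:ℝ)) * ((M:ℝ)/(d:ℝ))
            = cH * (cM - (M:ℝ)/(d:ℝ)) + ((M:ℝ)/(d:ℝ)) * (cH - (H:ℝ)/(d:ℝ)) := by ring
        rw [this]
        refine (abs_add_le _ _).trans ?_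
        rw [abs_mul, abs_mul, abs_of_nonneg (by positivity : (0:ℝ) ≤ cH),
          abs_of_nonneg (by positivity : (0:ℝ) ≤ (M:ℝ)/(d:ℝ))]
      have h1 : cH * |cM - (M:ℝ)/(d:ℝ)| ≤ 2*(H:ℝ)/(d:ℝ) := by
        calc cH * |cM - (M:ℝ)/(d:ℝ)| ≤ cH * 1 := by
              exact mul_le_mul_of_nonneg_left hM1 (by positivity)
          _ = cH := mul_one _
          _ ≤ 2*(H:ℝ)/(d:ℝ) := hH2
      have h2 : ((M:ℝ)/(d:ℝ)) * |cH - (H:ℝ)/(d:ℝ)| ≤ (M:ℝ)/(d:ℝ) := by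
        calc ((M:ℝ)/(d:ℝ)) * |cH - (H:ℝ)/(d:ℝ)| ≤ ((M:ℝ)/(d:ℝ)) * 1 :=
              mul_le_mul_of_nonneg_left hH1 (by positivity)
          _ = (M:ℝ)/(d:ℝ) := mul_one _
      calc (d.totient:ℝ) * |cH * cM - ((H:ℝ)/(d:ℝ)) * ((M:ℝ)/(d:ℝ))|
          ≤ (d:ℝ) * (2*(H:ℝ)/(d:ℝ) + (M:ℝ)/(d:ℝ)) := by
            refine mul_le_mul hφ (hprod.trans (by linarith)) (abs_nonneg _) hdr.le
        _ = 2*(H:ℝ) + (M:ℝ) := by field_simp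
    refine (Finset.sum_le_sum hbound).trans ?_
    rw [Finset.sum_const, Nat.card_Ioc, Nat.sub_zero, nsmul_eq_mul]
    have hn2H : (n:ℝ) ≤ 2*(H:ℝ) := by
      have : n ≤ 2*H := by omega
      exact_mod_cast this
    have hn2M : (n:ℝ) ≤ 2*(M:ℝ) := by
      have : n ≤ 2*M := by omega
      exact_mod_cast this
    nlinarith
  have hΦb := GcdSum.phi_sum_bound n hn1
  have hcast : ((n:ℕ):ℝ) = 2 * min (H:ℝ) (M:ℝ) := by
    rw [hn]
    push_cast [Nat.cast_min]
    ring
  rw [← hcast]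
  have hsplit : S - 6 * (H:ℝ) * (M:ℝ) / π ^ 2 * Real.log n
      = (S - (H:ℝ)*(M:ℝ)*Φ) + (H:ℝ)*(M:ℝ)*(Φ - 6/π^2 * Real.log n) := by
    have hπ : (0:ℝ) < π ^ 2 := by positivity
    field_simp
    ring
  rw [hsplit]
  refine (abs_add_le _ _).trans ?_
  rw [abs_mul, abs_mul, abs_of_pos hHr, abs_of_pos hMr]
  have h3 : (H:ℝ) * ((M:ℝ) * |Φ - 6/π^2 * Real.log n|) ≤ (H:ℝ)*((M:ℝ)*3) := by
    refine mul_le_mul_of_nonneg_left (mul_le_mul_of_nonneg_left hΦb hMr.le) hHr.le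
  nlinarith
end

section
/- For every complex number s with Re(s) > 2, ∫_{1}^{∞} (Σ_{n ≤ x} (x − n)·φ(n) − x³/π²)·x^{−s−2} dx = ζ(s−1)/(ζ(s)·s·(s+1)) − 1/(π²·(s−2)), where the inner sum runs over positive integers n ≤ x, φ is Euler's totient function, and ζ is the Riemann zeta function. -/
open Real MeasureTheory Set Complex LSeries
open scoped LSeries.notation



lemma conv_one_totient : (1 : ℕ → ℂ) ⍟ (fun n => (Nat.totient n : ℂ)) = fun n : ℕ => (n : ℂ) := by
  funext n
  rcases eq_or_ne n 0 with rfl | hn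
  · simpa using LSeries.convolution_map_zero _ _
  · rw [LSeries.convolution_def]
    simp only [Pi.one_apply, one_mul]
    rw [Nat.sum_divisorsAntidiagonal (f := fun _ b => (Nat.totient b : ℂ))]
    rw [Nat.sum_div_divisors n (fun d => (Nat.totient d : ℂ))]
    norm_cast
    exact Nat.sum_totient n

lemma lsum_phi (s : ℂ) (hs : 2 < s.re) :
    LSeriesSummable (fun n => (Nat.totient n : ℂ)) s := by
  refine LSeriesSummable_of_le_const_mul_rpow (x := 2) hs ⟨1, fun n hn => ?_⟩
  rw [one_mul]
  have h2 : ((2:ℝ) - 1) = 1 := by norm_num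
  rw [h2, Real.rpow_one]
  simp only [Complex.norm_natCast]
  exact_mod_cast Nat.totient_le n

lemma lid (s : ℂ) (hs : 2 < s.re) :
    LSeries (fun n : ℕ => (n : ℂ)) s = riemannZeta (s - 1) := by
  rw [← LSeries_one_eq_riemannZeta (by simp; linarith : 1 < (s-1).re)]
  unfold LSeries
  refine tsum_congr fun n => ?_
  rcases eq_or_ne n 0 with rfl | hn
  · simp [LSeries.term_zero]
  · rw [LSeries.term_of_ne_zero hn, LSeries.term_of_ne_zero hn]
    have hn' : (n : ℂ) ≠ 0 := Nat.cast_ne_zero.2 hn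
    have h1 : (n:ℂ) ^ s = (n:ℂ) ^ (s - 1) * n := by
      conv_lhs => rw [show s = (s - 1) + 1 by ring]
      rw [Complex.cpow_add _ _ hn', Complex.cpow_one]
    rw [h1, Pi.one_apply, mul_comm, ← div_div, div_self hn']

lemma lphi (s : ℂ) (hs : 2 < s.re) :
    LSeries (fun n => (Nat.totient n : ℂ)) s = riemannZeta (s - 1) / riemannZeta s := by
  have h1 : LSeriesSummable 1 s := LSeriesSummable_one_iff.2 (by linarith)
  have h2 := lsum_phi s hs
  have hconv := LSeries_convolution' h1 h2
  rw [conv_one_totient, lid s hs, LSeries_one_eq_riemannZeta (by linarith)] at hconv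
  have hz : riemannZeta s ≠ 0 := riemannZeta_ne_zero_of_one_lt_re (by linarith)
  field_simp [hconv]
  rw [hconv]; ring

/-- the summatory function -/
noncomputable def Sfun (x : ℝ) : ℝ := ∑ n ∈ Finset.Icc 1 ⌊x⌋₊, (x - (n : ℝ)) * (Nat.totient n : ℝ)

lemma Sfun_mono : Monotone Sfun := by
  intro x y hxy
  unfold Sfun
  have hsub : Finset.Icc 1 ⌊x⌋₊ ⊆ Finset.Icc 1 ⌊y⌋₊ :=
    Finset.Icc_subset_Icc le_rfl (Nat.floor_mono hxy)
  calc ∑ n ∈ Finset.Icc 1 ⌊x⌋₊, (x - (n : ℝ)) * (Nat.totient n : ℝ)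
      ≤ ∑ n ∈ Finset.Icc 1 ⌊x⌋₊, (y - (n : ℝ)) * (Nat.totient n : ℝ) := by
        refine Finset.sum_le_sum fun n _ => ?_
        exact mul_le_mul_of_nonneg_right (by linarith) (Nat.cast_nonneg _)
    _ ≤ ∑ n ∈ Finset.Icc 1 ⌊y⌋₊, (y - (n : ℝ)) * (Nat.totient n : ℝ) := by
        refine Finset.sum_le_sum_of_subset_of_nonneg hsub fun n hn _ => ?_
        rw [Finset.mem_Icc] at hn
        have h1 : 1 ≤ ⌊y⌋₊ := le_trans hn.1 hn.2
        have hy1 : (1:ℝ) ≤ y := (Nat.one_le_floor_iff y).mp h1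
        have hy0 : 0 ≤ y := by linarith
        have hny : (n : ℝ) ≤ y := (Nat.le_floor_iff hy0).mp hn.2
        exact mul_nonneg (by linarith) (Nat.cast_nonneg _)

lemma Sfun_nonneg (x : ℝ) : 0 ≤ Sfun x := by
  have := Sfun_mono (le_refl x)
  unfold Sfun
  refine Finset.sum_nonneg fun n hn => ?_
  rw [Finset.mem_Icc] at hn
  have h1 : 1 ≤ ⌊x⌋₊ := le_trans hn.1 hn.2
  have hx1 : (1:ℝ) ≤ x := (Nat.one_le_floor_iff x).mp h1
  have hx0 : 0 ≤ x := by linarith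
  have hnx : (n : ℝ) ≤ x := (Nat.le_floor_iff hx0).mp hn.2
  exact mul_nonneg (by linarith) (Nat.cast_nonneg _)

lemma Sfun_le (x : ℝ) (hx : 1 < x) : Sfun x ≤ x ^ 3 := by
  have hx0 : (0:ℝ) < x := by linarith
  have hfl : (⌊x⌋₊ : ℝ) ≤ x := Nat.floor_le hx0.le
  have hbound : ∀ n ∈ Finset.Icc 1 ⌊x⌋₊, (x - (n : ℝ)) * (Nat.totient n : ℝ) ≤ x ^ 2 := by
    intro n hn
    rw [Finset.mem_Icc] at hn
    have h1 : (Nat.totient n : ℝ) ≤ (n : ℝ) := by exact_mod_cast Nat.totient_le n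
    have h2 : (n : ℝ) ≤ x := le_trans (by exact_mod_cast Nat.cast_le.mpr hn.2) hfl
    have h3 : x - (n : ℝ) ≤ x := by
      have : (0:ℝ) ≤ n := Nat.cast_nonneg _
      linarith
    have h4 : (0:ℝ) ≤ x - n := by
      linarith
    calc (x - (n : ℝ)) * (Nat.totient n : ℝ) ≤ (x - n) * x := by
          exact mul_le_mul_of_nonneg_left (le_trans h1 h2) h4
      _ ≤ x * x := mul_le_mul_of_nonneg_right h3 hx0.le
      _ = x ^ 2 := by ring
  calc Sfun x ≤ (Finset.Icc 1 ⌊x⌋₊).card • (x ^ 2) := Finset.sum_le_card_nsmul _ _ _ hbound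
    _ = (⌊x⌋₊ : ℝ) * x ^ 2 := by
        rw [Nat.card_Icc]
        simp [nsmul_eq_mul]
    _ ≤ x * x ^ 2 := mul_le_mul_of_nonneg_right hfl (by positivity)
    _ = x ^ 3 := by ring



lemma real_int (σ : ℝ) (hσ : 2 < σ) {c : ℝ} (hc : 0 < c) :
    ∫ x in Ioi c, (x - c) * x ^ (-σ - 2) = c ^ (-σ) / (σ * (σ + 1)) := by
  have h1 : IntegrableOn (fun x : ℝ => x ^ (-σ - 1)) (Ioi c) :=
    integrableOn_Ioi_rpow_of_lt (by linarith) hc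
  have h2 : IntegrableOn (fun x : ℝ => c * x ^ (-σ - 2)) (Ioi c) :=
    (integrableOn_Ioi_rpow_of_lt (by linarith) hc).const_mul c
  have key : ∀ x ∈ Ioi c, (x - c) * x ^ (-σ - 2) = x ^ (-σ - 1) - c * x ^ (-σ - 2) := by
    intro x hx
    have hx0 : 0 < x := hc.trans hx
    have h : x ^ (-σ - 1) = x * x ^ (-σ - 2) := by
      rw [show -σ - 1 = 1 + (-σ - 2) by ring, Real.rpow_add hx0, Real.rpow_one]
    rw [h]; ring
  rw [setIntegral_congr_fun measurableSet_Ioi key, integral_sub h1 h2,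
    integral_Ioi_rpow_of_lt (by linarith) hc, MeasureTheory.integral_const_mul,
    integral_Ioi_rpow_of_lt (by linarith) hc]
  have e1 : -σ - 1 + 1 = -σ := by ring
  have e2 : -σ - 2 + 1 = -σ - 1 := by ring
  rw [e1, e2]
  have hcc := Real.rpow_add hc 1 (-σ - 1)
  rw [Real.rpow_one, show (1:ℝ) + (-σ - 1) = -σ by ring] at hcc
  rw [hcc]
  have hs0 : σ ≠ 0 := by linarith
  have hs1 : σ + 1 ≠ 0 := by linarith
  have hb : c ^ (-σ - 1) ≠ 0 := (Real.rpow_pos_of_pos hc _).ne'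
  have hd1 : -σ ≠ 0 := by intro h; apply hs0; linarith
  have hd2 : (-1 : ℝ) - σ ≠ 0 := by intro h; apply hs1; linarith
  have hd3 : -σ - 1 ≠ 0 := by intro h; apply hs1; linarith
  field_simp
  ring

noncomputable def Fp (s : ℂ) (n : ℕ) : ℝ → ℂ :=
  Set.indicator (Set.Ici (n : ℝ))
    (fun x => ((x : ℂ) - (n : ℕ)) * (Nat.totient n : ℂ) * (x : ℂ) ^ (-s - 2))

lemma base_contOn (s : ℂ) (n : ℕ) :
    ContinuousOn (fun x : ℝ => ((x : ℂ) - (n : ℕ)) * (Nat.totient n : ℂ) * (x : ℂ) ^ (-s - 2))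
      (Ioi (1:ℝ)) := by
  intro x hx
  have hx0 : (0:ℝ) < x := lt_trans one_pos hx
  exact (((Complex.continuous_ofReal.continuousAt.sub continuousAt_const).mul
    continuousAt_const).mul
    (Complex.continuousAt_ofReal_cpow_const x _ (Or.inr hx0.ne'))).continuousWithinAt

lemma Fp_meas (s : ℂ) (n : ℕ) :
    AEStronglyMeasurable (Fp s n) (volume.restrict (Ioi (1:ℝ))) :=
  ((base_contOn s n).aestronglyMeasurable measurableSet_Ioi).indicator measurableSet_Ici

lemma base_intOn (s : ℂ) (hs : 2 < s.re) {c : ℝ} (hc : 0 < c) (n : ℕ) :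
    IntegrableOn (fun x : ℝ => ((x : ℂ) - (n : ℕ)) * (Nat.totient n : ℂ) * (x : ℂ) ^ (-s - 2))
      (Ioi c) := by
  have hre1 : (-s - 1).re < -1 := by simp [Complex.sub_re, Complex.neg_re]; linarith
  have hre2 : (-s - 2).re < -1 := by simp [Complex.sub_re, Complex.neg_re]; linarith
  have hcomb : IntegrableOn (fun x : ℝ => (Nat.totient n : ℂ) * (x:ℂ) ^ (-s-1)
      - ((n:ℂ) * (Nat.totient n : ℂ)) * (x:ℂ) ^ (-s-2)) (Ioi c) :=
    ((integrableOn_Ioi_cpow_of_lt hre1 hc).const_mul _).sub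
      ((integrableOn_Ioi_cpow_of_lt hre2 hc).const_mul _)
  refine hcomb.congr_fun (fun x hx => ?_) measurableSet_Ioi
  have hx0 : (0:ℝ) < x := hc.trans hx
  have hxne : (x:ℂ) ≠ 0 := by exact_mod_cast hx0.ne'
  have h : (x : ℂ) ^ (-s - 1) = (x : ℂ) * (x : ℂ) ^ (-s - 2) := by
    rw [show -s - 1 = 1 + (-s - 2) by ring, Complex.cpow_add _ _ hxne, Complex.cpow_one]
  beta_reduce; rw [h]; ring

lemma Fp_int (s : ℂ) (hs : 2 < s.re) (n : ℕ) :
    Integrable (Fp s n) (volume.restrict (Ioi (1:ℝ))) := by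
  unfold Fp
  rw [integrable_indicator_iff measurableSet_Ici]
  rw [IntegrableOn, Measure.restrict_restrict measurableSet_Ici]
  exact (base_intOn s hs one_pos n).mono_set inter_subset_right

lemma norm_base (s : ℂ) (n : ℕ) {x : ℝ} (hx0 : 0 < x) (hnx : (n:ℝ) ≤ x) :
    ‖((x : ℂ) - (n : ℕ)) * (Nat.totient n : ℂ) * (x : ℂ) ^ (-s - 2)‖
      = (x - (n:ℝ)) * (Nat.totient n : ℝ) * x ^ (-s.re - 2) := by
  rw [norm_mul, norm_mul]
  have h1 : ‖(x : ℂ) - (n : ℕ)‖ = x - n := by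
    rw [show ((x:ℂ) - (n:ℕ)) = (((x - n : ℝ)):ℂ) by push_cast; ring, Complex.norm_real]
    exact Real.norm_of_nonneg (by linarith)
  have h2 : ‖((Nat.totient n : ℕ) : ℂ)‖ = (Nat.totient n : ℝ) := Complex.norm_natCast _
  have h3 : ‖(x : ℂ) ^ (-s - 2)‖ = x ^ (-s.re - 2) := by
    rw [Complex.norm_cpow_eq_rpow_re_of_pos hx0]
    all_goals simp [Complex.sub_re, Complex.neg_re]
  simp [h1, h2, h3]

lemma Fp_norm_le (s : ℂ) (hs : 2 < s.re) (n : ℕ) (hn : 1 ≤ n) :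
    ∫ x in Ioi (1:ℝ), ‖Fp s n x‖
      ≤ (n:ℝ) ^ (1 - s.re) / (s.re * (s.re + 1)) := by
  set σ := s.re
  have hn0 : (0:ℝ) < n := by exact_mod_cast hn
  have hIoi : ∫ x in Ioi (1:ℝ), ‖Fp s n x‖
      = ∫ x in Ioi (1:ℝ) ∩ Ici (n:ℝ),
          ‖((x : ℂ) - (n : ℕ)) * (Nat.totient n : ℂ) * (x : ℂ) ^ (-s - 2)‖ := by
    unfold Fp
    simp_rw [norm_indicator_eq_indicator_norm]
    rw [setIntegral_indicator measurableSet_Ici]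
  rw [hIoi]
  have hint : IntegrableOn
      (fun x : ℝ => ‖((x : ℂ) - (n : ℕ)) * (Nat.totient n : ℂ) * (x : ℂ) ^ (-s - 2)‖)
      (Ioi (n:ℝ)) := (base_intOn s hs hn0 n).norm
  have hle : (Ioi (1:ℝ) ∩ Ici (n:ℝ) : Set ℝ) ≤ᵐ[volume] Ioi (n:ℝ) := by
    rw [ae_le_set]
    refine measure_mono_null (fun x hx => ?_) (measure_singleton (n:ℝ))
    simp only [mem_diff, mem_inter_iff, mem_Ioi, mem_Ici, not_lt, mem_singleton_iff] at hx ⊢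
    exact le_antisymm hx.2 hx.1.2
  have hmono := setIntegral_mono_set hint
    (Filter.Eventually.of_forall fun x => norm_nonneg _) hle
  refine le_trans hmono ?_
  have hcongr : ∫ x in Ioi (n:ℝ),
      ‖((x : ℂ) - (n : ℕ)) * (Nat.totient n : ℂ) * (x : ℂ) ^ (-s - 2)‖
      = ∫ x in Ioi (n:ℝ), (Nat.totient n : ℝ) * ((x - (n:ℝ)) * x ^ (-σ - 2)) := by
    refine setIntegral_congr_fun measurableSet_Ioi fun x hx => ?_
    have hx0 : (0:ℝ) < x := hn0.trans hx
    rw [norm_base s n hx0 (le_of_lt hx)]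
    ring
  rw [hcongr, MeasureTheory.integral_const_mul, real_int σ hs hn0]
  have hphile : (Nat.totient n : ℝ) ≤ (n : ℝ) := by exact_mod_cast Nat.totient_le n
  have hpow : (n:ℝ) * (n:ℝ) ^ (-σ) = (n:ℝ) ^ (1 - σ) := by
    rw [show (1:ℝ) - σ = 1 + (-σ) by ring, Real.rpow_add hn0, Real.rpow_one]
  have hden : 0 < σ * (σ + 1) := by positivity
  have hnum : (Nat.totient n : ℝ) * (n:ℝ) ^ (-σ) ≤ (n:ℝ) ^ (1 - σ) := by
    calc (Nat.totient n : ℝ) * (n:ℝ) ^ (-σ) ≤ (n:ℝ) * (n:ℝ) ^ (-σ) :=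
        mul_le_mul_of_nonneg_right hphile (Real.rpow_nonneg hn0.le _)
      _ = (n:ℝ) ^ (1 - σ) := hpow
  rw [← mul_div_assoc]
  exact (div_le_div_iff_of_pos_right hden).mpr hnum

lemma cplx_int (s : ℂ) (hs : 2 < s.re) {c : ℝ} (hc : 0 < c) :
    ∫ x in Ioi c, ((x : ℂ) - (c : ℂ)) * (x : ℂ) ^ (-s - 2) = (c : ℂ) ^ (-s) / (s * (s + 1)) := by
  have hre1 : (-s - 1).re < -1 := by simp [Complex.sub_re, Complex.neg_re]; linarith
  have hre2 : (-s - 2).re < -1 := by simp [Complex.sub_re, Complex.neg_re]; linarith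
  have h1 : IntegrableOn (fun x : ℝ => (x : ℂ) ^ (-s - 1)) (Ioi c) :=
    integrableOn_Ioi_cpow_of_lt hre1 hc
  have h2 : IntegrableOn (fun x : ℝ => (c : ℂ) * (x : ℂ) ^ (-s - 2)) (Ioi c) :=
    (integrableOn_Ioi_cpow_of_lt hre2 hc).const_mul _
  have key : ∀ x ∈ Ioi c, ((x : ℂ) - (c : ℂ)) * (x : ℂ) ^ (-s - 2)
      = (x : ℂ) ^ (-s - 1) - (c : ℂ) * (x : ℂ) ^ (-s - 2) := by
    intro x hx
    have hx0 : (0 : ℝ) < x := hc.trans hx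
    have hxne : (x : ℂ) ≠ 0 := by exact_mod_cast hx0.ne'
    have h : (x : ℂ) ^ (-s - 1) = (x : ℂ) * (x : ℂ) ^ (-s - 2) := by
      rw [show -s - 1 = 1 + (-s - 2) by ring, Complex.cpow_add _ _ hxne, Complex.cpow_one]
    rw [h]; ring
  rw [setIntegral_congr_fun measurableSet_Ioi key, integral_sub h1 h2,
    integral_Ioi_cpow_of_lt hre1 hc, MeasureTheory.integral_const_mul,
    integral_Ioi_cpow_of_lt hre2 hc]
  have e1 : -s - 1 + 1 = -s := by ring
  have e2 : -s - 2 + 1 = -s - 1 := by ring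
  rw [e1, e2]
  have hcne : (c : ℂ) ≠ 0 := by exact_mod_cast hc.ne'
  have hcc := Complex.cpow_add 1 (-s - 1) hcne
  rw [Complex.cpow_one, show (1 : ℂ) + (-s - 1) = -s by ring] at hcc
  rw [hcc]
  have hs0 : s ≠ 0 := by
    intro h; rw [h] at hs; norm_num at hs
  have hs1 : s + 1 ≠ 0 := by
    intro h
    have : s.re + 1 = 0 := by simpa using congrArg Complex.re h
    linarith
  have hd1 : -s ≠ 0 := neg_ne_zero.mpr hs0
  have hd3 : -s - 1 ≠ 0 := by
    intro h; apply hs1; linear_combination -h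
  have hd2 : (-1 : ℂ) - s ≠ 0 := by
    intro h; apply hs1; linear_combination -h
  field_simp
  ring

lemma Fp_zero (s : ℂ) : Fp s 0 = fun _ => 0 := by
  funext x
  unfold Fp
  simp

lemma Fp_val (s : ℂ) (hs : 2 < s.re) (n : ℕ) :
    ∫ x in Ioi (1:ℝ), Fp s n x
      = (Nat.totient n : ℂ) * ((n:ℂ) ^ (-s) / (s * (s + 1))) := by
  rcases Nat.eq_zero_or_pos n with rfl | hn
  · rw [Fp_zero]; simp
  have hn0 : (0:ℝ) < n := by exact_mod_cast hn
  have hn1 : (1:ℝ) ≤ n := by exact_mod_cast hn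
  unfold Fp
  rw [setIntegral_indicator measurableSet_Ici]
  have hset : (Ioi (1:ℝ) ∩ Ici (n:ℝ) : Set ℝ) =ᵐ[volume] Ioi (n:ℝ) := by
    rw [ae_eq_set]
    constructor
    · refine measure_mono_null (fun x hx => ?_) (measure_singleton (n:ℝ))
      simp only [mem_diff, mem_inter_iff, mem_Ioi, mem_Ici, not_lt, mem_singleton_iff] at hx ⊢
      exact le_antisymm hx.2 hx.1.2
    · have he : (Ioi (n:ℝ) \ (Ioi 1 ∩ Ici (n:ℝ)) : Set ℝ) = ∅ := by
        refine eq_empty_iff_forall_notMem.mpr fun x hx => ?_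
        simp only [mem_diff, mem_Ioi, mem_inter_iff, mem_Ici, not_and, not_le] at hx
        have h1 : (1:ℝ) < x := lt_of_le_of_lt hn1 hx.1
        exact absurd (hx.2 h1) (not_lt.mpr hx.1.le)
      rw [he]
      exact measure_empty
  rw [setIntegral_congr_set hset]
  have hre : ∀ x : ℝ, ((x:ℂ) - (n:ℕ)) * (Nat.totient n : ℂ) * (x:ℂ) ^ (-s - 2)
      = (Nat.totient n : ℂ) * (((x:ℂ) - ((n:ℝ):ℂ)) * (x:ℂ) ^ (-s - 2)) := by
    intro x; push_cast; ring
  simp_rw [hre]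
  rw [MeasureTheory.integral_const_mul, cplx_int s hs hn0]
  norm_cast

lemma pt_id (s : ℂ) {x : ℝ} (hx : 1 < x) :
    ((((∑ n ∈ Finset.Icc 1 ⌊x⌋₊, (x - (n : ℝ)) * (Nat.totient n : ℝ))) : ℝ) : ℂ)
        * (x : ℂ) ^ (-s - 2) = ∑' n : ℕ, Fp s n x := by
  have hx0 : (0:ℝ) ≤ x := by linarith
  have hzero : ∀ n ∉ Finset.Icc 1 ⌊x⌋₊, Fp s n x = 0 := by
    intro n hn
    rw [Finset.mem_Icc, not_and_or, not_le, not_le] at hn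
    rcases hn with hn | hn
    · interval_cases n
      simp [Fp]
    · have hxn : x < n := (Nat.floor_lt hx0).mp hn
      unfold Fp
      exact Set.indicator_of_notMem (by simpa using hxn.not_ge) _
  rw [tsum_eq_sum hzero]
  rw [show ((((∑ n ∈ Finset.Icc 1 ⌊x⌋₊, (x - (n : ℝ)) * (Nat.totient n : ℝ))) : ℝ) : ℂ)
      = ∑ n ∈ Finset.Icc 1 ⌊x⌋₊, (((x - (n : ℝ)) * (Nat.totient n : ℝ) : ℝ) : ℂ) by push_cast; rfl]
  rw [Finset.sum_mul]
  refine Finset.sum_congr rfl fun n hn => ?_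
  rw [Finset.mem_Icc] at hn
  have hnx : (n:ℝ) ≤ x := (Nat.le_floor_iff hx0).mp hn.2
  unfold Fp
  rw [Set.indicator_of_mem (by simpa using hnx)]
  push_cast
  ring

lemma summable_norms (s : ℂ) (hs : 2 < s.re) :
    Summable (fun n : ℕ => ∫ x in Ioi (1:ℝ), ‖Fp s n x‖) := by
  set σ := s.re
  have hb : Summable (fun n : ℕ => (n:ℝ) ^ (1 - σ) / (σ * (σ + 1))) :=
    (Real.summable_nat_rpow.mpr (by linarith)).div_const _
  refine Summable.of_nonneg_of_le (fun n => integral_nonneg fun x => norm_nonneg _)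
    (fun n => ?_) hb
  rcases Nat.eq_zero_or_pos n with rfl | hn
  · rw [Fp_zero]
    simp only [norm_zero]
    rw [MeasureTheory.integral_zero]
    positivity
  · exact Fp_norm_le s hs n hn

lemma B_int (s : ℂ) (hs : 2 < s.re) :
    IntegrableOn (fun x : ℝ => (((x ^ 3 / π ^ 2 : ℝ)) : ℂ) * (x : ℂ) ^ (-s - 2))
      (Ioi (1:ℝ)) := by
  have hre : (1 - s).re < -1 := by simp [Complex.sub_re]; linarith
  have hcomb : IntegrableOn (fun x : ℝ => ((π:ℂ) ^ 2)⁻¹ * (x:ℂ) ^ (1 - s)) (Ioi (1:ℝ)) :=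
    (integrableOn_Ioi_cpow_of_lt hre one_pos).const_mul _
  refine hcomb.congr_fun (fun x hx => ?_) measurableSet_Ioi
  have hx0 : (0:ℝ) < x := lt_trans one_pos hx
  have hxne : (x:ℂ) ≠ 0 := by exact_mod_cast hx0.ne'
  have hsplit : (x:ℂ) ^ (1 - s) = (x:ℂ) ^ (3:ℕ) * (x:ℂ) ^ (-s - 2) := by
    rw [← Complex.cpow_natCast (x:ℂ) 3, ← Complex.cpow_add _ _ hxne]
    congr 1
    push_cast
    ring
  beta_reduce
  rw [hsplit]
  push_cast
  field_simp

lemma B_val (s : ℂ) (hs : 2 < s.re) :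
    ∫ x in Ioi (1:ℝ), (((x ^ 3 / π ^ 2 : ℝ)) : ℂ) * (x : ℂ) ^ (-s - 2)
      = 1 / ((π : ℂ) ^ 2 * (s - 2)) := by
  have hre : (1 - s).re < -1 := by simp [Complex.sub_re]; linarith
  have hcongr : ∀ x ∈ Ioi (1:ℝ),
      (((x ^ 3 / π ^ 2 : ℝ)) : ℂ) * (x : ℂ) ^ (-s - 2) = ((π:ℂ) ^ 2)⁻¹ * (x:ℂ) ^ (1 - s) := by
    intro x hx
    have hx0 : (0:ℝ) < x := lt_trans one_pos hx
    have hxne : (x:ℂ) ≠ 0 := by exact_mod_cast hx0.ne'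
    have hsplit : (x:ℂ) ^ (1 - s) = (x:ℂ) ^ (3:ℕ) * (x:ℂ) ^ (-s - 2) := by
      rw [← Complex.cpow_natCast (x:ℂ) 3, ← Complex.cpow_add _ _ hxne]
      congr 1
      push_cast
      ring
    rw [hsplit]
    push_cast
    field_simp
  rw [setIntegral_congr_fun measurableSet_Ioi hcongr, MeasureTheory.integral_const_mul,
    integral_Ioi_cpow_of_lt hre one_pos]
  rw [Complex.ofReal_one, Complex.one_cpow]
  have hpi : (π:ℂ) ≠ 0 := by exact_mod_cast Real.pi_ne_zero
  have hs2 : s - 2 ≠ 0 := by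
    intro h
    have : s.re - 2 = 0 := by simpa using congrArg Complex.re h
    linarith
  have h12 : (1:ℂ) - s + 1 = -(s - 2) := by ring
  rw [h12]
  field_simp

theorem totient_cesaro_mellin_transform (s : ℂ) (hs : 2 < s.re) :
    ∫ x in Set.Ioi (1 : ℝ),
        (((∑ n ∈ Finset.Icc 1 ⌊x⌋₊, (x - (n : ℝ)) * (Nat.totient n : ℝ))
            - x ^ 3 / π ^ 2 : ℝ) : ℂ) * (x : ℂ) ^ (-s - 2) =
      riemannZeta (s - 1) / (riemannZeta s * s * (s + 1)) - 1 / ((π : ℂ) ^ 2 * (s - 2)) := by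
  have hσ : 2 < s.re := hs
  -- measurability of the main term
  have hcpow_meas : AEStronglyMeasurable (fun x : ℝ => (x:ℂ) ^ (-s - 2))
      (volume.restrict (Ioi (1:ℝ))) := by
    refine ContinuousOn.aestronglyMeasurable (fun x hx => ?_) measurableSet_Ioi
    have hx0 : (0:ℝ) < x := lt_trans one_pos hx
    exact (Complex.continuousAt_ofReal_cpow_const x _ (Or.inr hx0.ne')).continuousWithinAt
  have hf_meas : AEStronglyMeasurable (fun x : ℝ => ((Sfun x : ℝ) : ℂ) * (x:ℂ) ^ (-s - 2))
      (volume.restrict (Ioi (1:ℝ))) :=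
    ((Complex.measurable_ofReal.comp Sfun_mono.measurable).aestronglyMeasurable).mul hcpow_meas
  have hf_int : IntegrableOn (fun x : ℝ => ((Sfun x : ℝ) : ℂ) * (x:ℂ) ^ (-s - 2))
      (Ioi (1:ℝ)) := by
    refine Integrable.mono' (g := fun x : ℝ => x ^ (1 - s.re))
      (integrableOn_Ioi_rpow_of_lt (by linarith) one_pos) hf_meas ?_
    rw [ae_restrict_iff' measurableSet_Ioi]
    filter_upwards with x hx
    have hx0 : (0:ℝ) < x := lt_trans one_pos hx
    have hnorm : ‖((Sfun x : ℝ) : ℂ) * (x:ℂ) ^ (-s - 2)‖ = Sfun x * x ^ (-s.re - 2) := by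
      rw [norm_mul, Complex.norm_real, Real.norm_of_nonneg (Sfun_nonneg x),
        Complex.norm_cpow_eq_rpow_re_of_pos hx0]
      all_goals simp [Complex.sub_re, Complex.neg_re]
    rw [hnorm]
    have hsplit : x ^ (1 - s.re) = x ^ (3:ℕ) * x ^ (-s.re - 2) := by
      rw [← Real.rpow_natCast x 3, ← Real.rpow_add hx0]
      congr 1
      push_cast
      ring
    rw [hsplit]
    exact mul_le_mul_of_nonneg_right (Sfun_le x hx) (Real.rpow_nonneg hx0.le _)
  -- split the integral
  have hsplit_int : ∫ x in Set.Ioi (1 : ℝ),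
        (((∑ n ∈ Finset.Icc 1 ⌊x⌋₊, (x - (n : ℝ)) * (Nat.totient n : ℝ))
            - x ^ 3 / π ^ 2 : ℝ) : ℂ) * (x : ℂ) ^ (-s - 2)
      = (∫ x in Ioi (1:ℝ), ((Sfun x : ℝ) : ℂ) * (x:ℂ) ^ (-s - 2))
        - ∫ x in Ioi (1:ℝ), (((x ^ 3 / π ^ 2 : ℝ)) : ℂ) * (x : ℂ) ^ (-s - 2) := by
    rw [← integral_sub hf_int (B_int s hs)]
    refine setIntegral_congr_fun measurableSet_Ioi fun x hx => ?_
    unfold Sfun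
    push_cast
    ring
  rw [hsplit_int, B_val s hs]
  congr 1
  -- evaluate the main integral
  have h1 : ∫ x in Ioi (1:ℝ), ((Sfun x : ℝ) : ℂ) * (x:ℂ) ^ (-s - 2)
      = ∫ x in Ioi (1:ℝ), ∑' n : ℕ, Fp s n x :=
    setIntegral_congr_fun measurableSet_Ioi fun x hx => pt_id s hx
  rw [h1, ← integral_tsum_of_summable_integral_norm (fun n => Fp_int s hs n)
    (summable_norms s hs)]
  have h3 : ∑' n : ℕ, ∫ x in Ioi (1:ℝ), Fp s n x
      = ∑' n : ℕ, LSeries.term (fun n => (Nat.totient n : ℂ)) s n / (s * (s + 1)) := by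
    refine tsum_congr fun n => ?_
    rw [Fp_val s hs n]
    rcases eq_or_ne n 0 with rfl | hn
    · simp [LSeries.term_zero]
    · rw [LSeries.term_of_ne_zero hn, Complex.cpow_neg]
      ring
  rw [h3, tsum_div_const]
  have h4 : ∑' n : ℕ, LSeries.term (fun n => (Nat.totient n : ℂ)) s n
      = LSeries (fun n => (Nat.totient n : ℂ)) s := rfl
  rw [h4, lphi s hs]
  rw [div_div, mul_assoc]
end
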